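/- Γ̂ is generated by the four matrices Ã, T̃, E₁, E₂: the subgroup of GL(4, ZMod 5) generated by {Ã, T̃, E₁, E₂} has exactly Γ̂ as its underlying set of matrices. -/

import Mathlib

/-! Since `3 = 2⁻¹` in `ZMod 5`, the corner entry `3n² + 2n` is `n(n-1)/2`, and any `q` with
`q (m + n) = q m + q n + m n` makes the matrices `gammaHatMatrix q n a b c` closed under
products and inverses: they form a subgroup `Γ̂` containing the four generators. Conversely `Ã`
has `n`-parameter `1`, so for `X ∈ Γ̂` the product `Ã⁻ⁿ X` has `n`-parameter `0`; those matrices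
form a copy of `(ZMod 5)³`, spanned by `E₁`, `E₂`, `T̃`. -/

open Matrix

instance : Fact (Nat.Prime 5) := ⟨by norm_num⟩

/-- The reduction mod 5 of `P⁻¹A⁻¹P`. -/
def Atil : Matrix (Fin 4) (Fin 4) (ZMod 5) :=
  !![1, 1, 0, 0; 0, 1, 1, 4; 0, 0, 1, 4; 0, 0, 0, 1]

/-- The reduction mod 5 of `P⁻¹T⁻¹P`. -/
def Ttil : Matrix (Fin 4) (Fin 4) (ZMod 5) :=
  !![1, 0, 0, 0; 0, 1, 0, 0; 0, 0, 1, 1; 0, 0, 0, 1]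

def E₁ : Matrix (Fin 4) (Fin 4) (ZMod 5) :=
  !![1, 0, 0, 1; 0, 1, 0, 0; 0, 0, 1, 0; 0, 0, 0, 1]

def E₂ : Matrix (Fin 4) (Fin 4) (ZMod 5) :=
  !![1, 0, 0, 0; 0, 1, 0, 1; 0, 0, 1, 0; 0, 0, 0, 1]

def AtilGL : GL (Fin 4) (ZMod 5) :=
  Matrix.GeneralLinearGroup.mkOfDetNeZero Atil (by decide)

def TtilGL : GL (Fin 4) (ZMod 5) :=
  Matrix.GeneralLinearGroup.mkOfDetNeZero Ttil (by decide)

def E₁GL : GL (Fin 4) (ZMod 5) :=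
  Matrix.GeneralLinearGroup.mkOfDetNeZero E₁ (by decide)

def E₂GL : GL (Fin 4) (ZMod 5) :=
  Matrix.GeneralLinearGroup.mkOfDetNeZero E₂ (by decide)

section

variable {R : Type*} [CommRing R] {q : R → R}

def gammaHatMatrix (q : R → R) (n a b c : R) : Matrix (Fin 4) (Fin 4) R :=
  !![1, n, q n, a; 0, 1, n, b; 0, 0, 1, c; 0, 0, 0, 1]

theorem gammaHatMatrix_mul (hq : ∀ x y, q (x + y) = q x + q y + x * y) (n a b c n' a' b' c' : R) :
    gammaHatMatrix q n a b c * gammaHatMatrix q n' a' b' c' =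
      gammaHatMatrix q (n + n') (a + n * b' + q n * c' + a') (b + n * c' + b') (c + c') := by
  ext i j
  fin_cases i <;> fin_cases j <;> simp [gammaHatMatrix, hq] <;> ring

theorem gammaHatMatrix_zero (hq : ∀ x y, q (x + y) = q x + q y + x * y) :
    gammaHatMatrix q 0 0 0 0 = 1 := by
  have hq₀ : q 0 = 0 := by simpa using hq 0 0
  ext i j
  fin_cases i <;> fin_cases j <;> simp [gammaHatMatrix, hq₀]

theorem gammaHatMatrix_zero_mul_zero (hq : ∀ x y, q (x + y) = q x + q y + x * y)
    (a b c a' b' c' : R) :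
    gammaHatMatrix q 0 a b c * gammaHatMatrix q 0 a' b' c' =
      gammaHatMatrix q 0 (a + a') (b + b') (c + c') := by
  have hq₀ : q 0 = 0 := by simpa using hq 0 0
  rw [gammaHatMatrix_mul hq]
  congr 1 <;> simp [hq₀]

theorem gammaHatMatrix_mul_inv (hq : ∀ x y, q (x + y) = q x + q y + x * y) (n a b c : R) :
    gammaHatMatrix q n a b c *
        gammaHatMatrix q (-n) (-a + n * b - n ^ 2 * c + q n * c) (-b + n * c) (-c) = 1 := by
  rw [gammaHatMatrix_mul hq, ← gammaHatMatrix_zero hq]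
  congr 1 <;> ring

theorem coe_inv_of_coe_eq_gammaHatMatrix
    (hq : ∀ x y, q (x + y) = q x + q y + x * y) {X : GL (Fin 4) R} {n a b c : R}
    (hX : (X : Matrix (Fin 4) (Fin 4) R) = gammaHatMatrix q n a b c) :
    ((X⁻¹ : GL (Fin 4) R) : Matrix (Fin 4) (Fin 4) R) =
      gammaHatMatrix q (-n) (-a + n * b - n ^ 2 * c + q n * c) (-b + n * c) (-c) :=
  Units.inv_eq_of_mul_eq_one_right (by rw [hX]; exact gammaHatMatrix_mul_inv hq n a b c)

theorem gammaHatMatrix_pow (hq : ∀ x y, q (x + y) = q x + q y + x * y) (n a b c : R) (k : ℕ) :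
    ∃ a' b' c', gammaHatMatrix q n a b c ^ k = gammaHatMatrix q (k * n) a' b' c' := by
  induction k with
  | zero => exact ⟨0, 0, 0, by simp [gammaHatMatrix_zero hq]⟩
  | succ k ih =>
    obtain ⟨a', b', c', h⟩ := ih
    refine ⟨_, _, _, by rw [pow_succ, h, gammaHatMatrix_mul hq, Nat.cast_succ, add_one_mul]⟩

theorem gammaHatMatrix_zero_pow (hq : ∀ x y, q (x + y) = q x + q y + x * y) (a b c : R) (k : ℕ) :
    gammaHatMatrix q 0 a b c ^ k = gammaHatMatrix q 0 (k * a) (k * b) (k * c) := by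
  induction k with
  | zero => simp [gammaHatMatrix_zero hq]
  | succ k ih =>
    rw [pow_succ, ih, gammaHatMatrix_zero_mul_zero hq]
    congr 1 <;> push_cast <;> ring

def gammaHatSubgroup (q : R → R) (hq : ∀ x y, q (x + y) = q x + q y + x * y) :
    Subgroup (GL (Fin 4) R) where
  carrier := {X | ∃ n a b c, (X : Matrix (Fin 4) (Fin 4) R) = gammaHatMatrix q n a b c}
  mul_mem' := by
    rintro X Y ⟨n, a, b, c, hX⟩ ⟨n', a', b', c', hY⟩
    exact ⟨_, _, _, _, by rw [Units.val_mul, hX, hY, gammaHatMatrix_mul hq]⟩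
  one_mem' := ⟨0, 0, 0, 0, (gammaHatMatrix_zero hq).symm⟩
  inv_mem' := by
    rintro X ⟨n, a, b, c, hX⟩
    exact ⟨_, _, _, _, coe_inv_of_coe_eq_gammaHatMatrix hq hX⟩

end

section

variable {m : ℕ} [NeZero m] {q : ZMod m → ZMod m}

theorem mem_of_coe_eq_gammaHatMatrix_zero (hq : ∀ x y, q (x + y) = q x + q y + x * y)
    {H : Subgroup (GL (Fin 4) (ZMod m))} {T e₁ e₂ : GL (Fin 4) (ZMod m)}
    (hT : (T : Matrix (Fin 4) (Fin 4) (ZMod m)) = gammaHatMatrix q 0 0 0 1)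
    (he₁ : (e₁ : Matrix (Fin 4) (Fin 4) (ZMod m)) = gammaHatMatrix q 0 1 0 0)
    (he₂ : (e₂ : Matrix (Fin 4) (Fin 4) (ZMod m)) = gammaHatMatrix q 0 0 1 0)
    (hTH : T ∈ H) (he₁H : e₁ ∈ H) (he₂H : e₂ ∈ H) {Y : GL (Fin 4) (ZMod m)} {a b c : ZMod m}
    (hY : (Y : Matrix (Fin 4) (Fin 4) (ZMod m)) = gammaHatMatrix q 0 a b c) : Y ∈ H := by
  have hdecomp : Y = e₁ ^ a.val * e₂ ^ b.val * T ^ c.val := by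
    ext : 1
    simp only [Units.val_mul, Units.val_pow_eq_pow_val, he₁, he₂, hT,
      gammaHatMatrix_zero_pow hq, gammaHatMatrix_zero_mul_zero hq, ZMod.natCast_zmod_val, hY]
    congr 1 <;> simp
  rw [hdecomp]
  exact mul_mem (mul_mem (pow_mem he₁H _) (pow_mem he₂H _)) (pow_mem hTH _)

theorem gammaHatSubgroup_le_closure (hq : ∀ x y, q (x + y) = q x + q y + x * y)
    {A T e₁ e₂ : GL (Fin 4) (ZMod m)}
    (hA : ∃ a b c, (A : Matrix (Fin 4) (Fin 4) (ZMod m)) = gammaHatMatrix q 1 a b c)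
    (hT : (T : Matrix (Fin 4) (Fin 4) (ZMod m)) = gammaHatMatrix q 0 0 0 1)
    (he₁ : (e₁ : Matrix (Fin 4) (Fin 4) (ZMod m)) = gammaHatMatrix q 0 1 0 0)
    (he₂ : (e₂ : Matrix (Fin 4) (Fin 4) (ZMod m)) = gammaHatMatrix q 0 0 1 0) :
    gammaHatSubgroup q hq ≤ Subgroup.closure {A, T, e₁, e₂} := by
  rintro X ⟨n, a, b, c, hX⟩
  obtain ⟨a₁, b₁, c₁, hA₁⟩ := hA
  obtain ⟨a', b', c', hAn⟩ := gammaHatMatrix_pow hq 1 a₁ b₁ c₁ n.val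
  rw [mul_one, ZMod.natCast_zmod_val] at hAn
  have hAn' : ((A ^ n.val : GL (Fin 4) (ZMod m)) : Matrix (Fin 4) (Fin 4) (ZMod m)) =
      gammaHatMatrix q n a' b' c' := by
    rw [Units.val_pow_eq_pow_val, hA₁, hAn]
  obtain ⟨a₀, b₀, c₀, hY⟩ : ∃ a₀ b₀ c₀,
      (((A ^ n.val)⁻¹ * X : GL (Fin 4) (ZMod m)) : Matrix (Fin 4) (Fin 4) (ZMod m)) =
        gammaHatMatrix q 0 a₀ b₀ c₀ :=
    ⟨_, _, _, by rw [Units.val_mul, coe_inv_of_coe_eq_gammaHatMatrix hq hAn', hX,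
      gammaHatMatrix_mul hq, neg_add_cancel]⟩
  have hgen : ∀ g ∈ ({A, T, e₁, e₂} : Set (GL (Fin 4) (ZMod m))),
      g ∈ Subgroup.closure {A, T, e₁, e₂} :=
    fun _ ↦ (Subgroup.subset_closure ·)
  have hY_mem := mem_of_coe_eq_gammaHatMatrix_zero hq hT he₁ he₂
    (hgen T (by simp)) (hgen e₁ (by simp)) (hgen e₂ (by simp)) hY
  simpa using mul_mem (pow_mem (hgen A (by simp)) n.val) hY_mem

theorem closure_eq_gammaHatSubgroup (hq : ∀ x y, q (x + y) = q x + q y + x * y)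
    {A T e₁ e₂ : GL (Fin 4) (ZMod m)}
    (hA : ∃ a b c, (A : Matrix (Fin 4) (Fin 4) (ZMod m)) = gammaHatMatrix q 1 a b c)
    (hT : (T : Matrix (Fin 4) (Fin 4) (ZMod m)) = gammaHatMatrix q 0 0 0 1)
    (he₁ : (e₁ : Matrix (Fin 4) (Fin 4) (ZMod m)) = gammaHatMatrix q 0 1 0 0)
    (he₂ : (e₂ : Matrix (Fin 4) (Fin 4) (ZMod m)) = gammaHatMatrix q 0 0 1 0) :
    Subgroup.closure {A, T, e₁, e₂} = gammaHatSubgroup q hq := by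
  refine le_antisymm (Subgroup.closure_le _ |>.2 ?_) (gammaHatSubgroup_le_closure hq hA hT he₁ he₂)
  obtain ⟨a, b, c, hA⟩ := hA
  simp only [Set.insert_subset_iff, Set.singleton_subset_iff]
  exact ⟨⟨1, a, b, c, hA⟩, ⟨0, 0, 0, 1, hT⟩, ⟨0, 1, 0, 0, he₁⟩, ⟨0, 0, 1, 0, he₂⟩⟩

end

/-- `Γ̂` is generated by the four matrices `Ã`, `T̃`, `E₁`, `E₂`. -/
theorem gammaHat_generated (X : GL (Fin 4) (ZMod 5)) :
    X ∈ Subgroup.closure {AtilGL, TtilGL, E₁GL, E₂GL} ↔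
      ∃ n a b c : ZMod 5,
        (X : Matrix (Fin 4) (Fin 4) (ZMod 5)) =
          !![1, n, 3 * n ^ 2 + 2 * n, a; 0, 1, n, b; 0, 0, 1, c; 0, 0, 0, 1] := by
  have h5 : (5 : ZMod 5) = 0 := rfl
  have hq : ∀ x y : ZMod 5,
      3 * (x + y) ^ 2 + 2 * (x + y) = (3 * x ^ 2 + 2 * x) + (3 * y ^ 2 + 2 * y) + x * y :=
    fun x y ↦ by linear_combination x * y * h5
  rw [closure_eq_gammaHatSubgroup (q := fun n => 3 * n ^ 2 + 2 * n) hq ⟨0, 4, 4, by decide⟩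
    (by decide) (by decide) (by decide)]
  rfl
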